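/- Under the action on (ℤ/2l²ℤ)² generated by (a,b) ↦ (b+l², a+l²) and (a,b) ↦ (2l²-a, b-a) with l an odd prime, the point (0, l²) is a fixed point, and for each a ≢ l² (mod 2l²) the three points (0,a), (a+l², l²), (l²-a, -a) form an orbit of size 3. -/

import Mathlib

/-- `ρ(a,b) = (b+l², a+l²)` on `(ℤ/2l²ℤ)²`. -/
def rhoPerm (l : ℕ) : Equiv.Perm (ZMod (2 * l ^ 2) × ZMod (2 * l ^ 2)) :=
  Function.Involutive.toPerm
    (fun x => (x.2 + ((l ^ 2 : ℕ) : ZMod (2 * l ^ 2)), x.1 + ((l ^ 2 : ℕ) : ZMod (2 * l ^ 2))))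
    (fun x => by
      have h : ((l ^ 2 : ℕ) : ZMod (2 * l ^ 2)) + ((l ^ 2 : ℕ) : ZMod (2 * l ^ 2)) = 0 := by
        rw [← Nat.cast_add, show l ^ 2 + l ^ 2 = 2 * l ^ 2 by ring, ZMod.natCast_self]
      obtain ⟨a, b⟩ := x
      simp only [Prod.mk.injEq, add_assoc, h, add_zero])

/-- `τ(a,b) = (2l²-a, b-a)` on `(ℤ/2l²ℤ)²`. -/
def tauPerm (l : ℕ) : Equiv.Perm (ZMod (2 * l ^ 2) × ZMod (2 * l ^ 2)) :=
  Function.Involutive.toPerm (fun x => (-x.1, x.2 - x.1)) (fun x => by simp)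

/-- The group generated by `ρ` and `τ`. -/
def Grt (l : ℕ) : Subgroup (Equiv.Perm (ZMod (2 * l ^ 2) × ZMod (2 * l ^ 2))) :=
  Subgroup.closure {rhoPerm l, tauPerm l}

lemma orbit_subset_of_stable {α : Type*} {gens : Set (Equiv.Perm α)} {S : Set α}
    (hstab : ∀ g ∈ gens, ∀ p ∈ S, g p ∈ S)
    (hselfinv : ∀ g ∈ gens, g⁻¹ = g)
    {x : α} (hx : x ∈ S) :
    MulAction.orbit (Subgroup.closure gens) x ⊆ S := by
  rintro _ ⟨⟨g, hg⟩, rfl⟩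
  have key : ∀ g' (_ : g' ∈ Subgroup.closure gens),
      (∀ p ∈ S, g' p ∈ S) ∧ (∀ p ∈ S, g'⁻¹ p ∈ S) := by
    intro g' hg'
    refine Subgroup.closure_induction ?_ ?_ ?_ ?_ hg'
    · intro y hy
      exact ⟨hstab y hy, by rw [hselfinv y hy]; exact hstab y hy⟩
    · simp
    · rintro y z hy hz ⟨hy1, hy2⟩ ⟨hz1, hz2⟩
      refine ⟨fun p hp => ?_, fun p hp => ?_⟩
      · rw [Equiv.Perm.mul_apply]; exact hy1 _ (hz1 _ hp)
      · rw [mul_inv_rev, Equiv.Perm.mul_apply]; exact hz2 _ (hy2 _ hp)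
    · rintro y hy ⟨hy1, hy2⟩
      exact ⟨hy2, by simpa using hy1⟩
  exact (key g hg).1 x hx

/-- `(0, l²)` is a fixed point, and for `a ≢ l²` the points
`(0,a)`, `(a+l², l²)`, `(l²-a, -a)` form an orbit of size 3. -/
theorem orbit_structure_two_lsq_odd (l : ℕ) (hl : l.Prime) (hlodd : Odd l) :
    MulAction.orbit (Grt l)
        (((0 : ZMod (2 * l ^ 2)), ((l ^ 2 : ℕ) : ZMod (2 * l ^ 2)))) =
      {((0 : ZMod (2 * l ^ 2)), ((l ^ 2 : ℕ) : ZMod (2 * l ^ 2)))} ∧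
    ∀ a : ZMod (2 * l ^ 2), a ≠ ((l ^ 2 : ℕ) : ZMod (2 * l ^ 2)) →
      MulAction.orbit (Grt l) ((0, a) : ZMod (2 * l ^ 2) × ZMod (2 * l ^ 2)) =
        {(0, a), (a + ((l ^ 2 : ℕ) : ZMod (2 * l ^ 2)), ((l ^ 2 : ℕ) : ZMod (2 * l ^ 2))),
          (((l ^ 2 : ℕ) : ZMod (2 * l ^ 2)) - a, -a)} ∧
      Nat.card (MulAction.orbit (Grt l) ((0, a) : ZMod (2 * l ^ 2) × ZMod (2 * l ^ 2))) = 3 := by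
  unfold Grt
  set c : ZMod (2 * l ^ 2) := ((l ^ 2 : ℕ) : ZMod (2 * l ^ 2)) with hc
  have hcc : c + c = 0 := by
    rw [hc, ← Nat.cast_add, show l ^ 2 + l ^ 2 = 2 * l ^ 2 by ring, ZMod.natCast_self]
  have hneg : -c = c := by rw [neg_eq_iff_add_eq_zero, hcc]
  have hrho : ∀ p : ZMod (2 * l ^ 2) × ZMod (2 * l ^ 2),
      rhoPerm l p = (p.2 + c, p.1 + c) := fun p => rfl
  have htau : ∀ p : ZMod (2 * l ^ 2) × ZMod (2 * l ^ 2),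
      tauPerm l p = (-p.1, p.2 - p.1) := fun p => rfl
  have hrhoinv : (rhoPerm l)⁻¹ = rhoPerm l := by
    rw [Equiv.Perm.inv_def, rhoPerm]; exact Function.Involutive.toPerm_symm _
  have htauinv : (tauPerm l)⁻¹ = tauPerm l := by
    rw [Equiv.Perm.inv_def, tauPerm]; exact Function.Involutive.toPerm_symm _
  have hselfinv : ∀ g ∈ ({rhoPerm l, tauPerm l} :
      Set (Equiv.Perm (ZMod (2 * l ^ 2) × ZMod (2 * l ^ 2)))), g⁻¹ = g := by
    rintro g (rfl | rfl) <;> [exact hrhoinv; exact htauinv]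
  constructor
  · -- fixed point
    apply Set.eq_of_subset_of_subset
    · apply orbit_subset_of_stable
        (S := {(((0 : ZMod (2 * l ^ 2)), c) : ZMod (2 * l ^ 2) × ZMod (2 * l ^ 2))})
        _ hselfinv rfl
      rintro g (rfl | rfl) p hp <;> rw [Set.mem_singleton_iff] at hp <;> subst hp
      · rw [hrho]
        show _ = _
        rw [Prod.mk.injEq]
        exact ⟨by linear_combination hcc, by linear_combination⟩
      · rw [htau]
        show _ = _
        rw [Prod.mk.injEq]
        exact ⟨by linear_combination, by linear_combination⟩
    · rintro p hp
      rw [Set.mem_singleton_iff] at hp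
      subst hp
      exact MulAction.mem_orbit_self _
  · intro a ha
    have h1 : a + c ≠ 0 := fun h => ha (by linear_combination h - hcc)
    have h2 : (0 : ZMod (2 * l ^ 2)) ≠ c - a := fun h => ha (by linear_combination h)
    have h3 : c ≠ -a := fun h => ha (by linear_combination h - hcc)
    have horb : MulAction.orbit (Subgroup.closure {rhoPerm l, tauPerm l})
        ((0, a) : ZMod (2 * l ^ 2) × ZMod (2 * l ^ 2)) =
        {(0, a), (a + c, c), (c - a, -a)} := by
      apply Set.eq_of_subset_of_subset
      · apply orbit_subset_of_stable _ hselfinv (by left; rfl)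
        rintro g (rfl | rfl) p (rfl | rfl | rfl)
        · -- ρ (0,a) = (a+c, c)
          rw [hrho]; right; left
          rw [Prod.mk.injEq]
          exact ⟨by linear_combination, by linear_combination⟩
        · -- ρ (a+c, c) = (0, a)
          rw [hrho]; left
          rw [Prod.mk.injEq]
          exact ⟨by linear_combination hcc, by linear_combination hcc⟩
        · -- ρ (c-a, -a) = (c-a, -a)
          rw [hrho]; right; right
          show _ = _
          rw [Prod.mk.injEq]
          exact ⟨by linear_combination, by linear_combination hcc⟩
        · -- τ (0,a) = (0,a)
          rw [htau]; left
          rw [Prod.mk.injEq]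
          exact ⟨by linear_combination, by linear_combination⟩
        · -- τ (a+c, c) = (c-a, -a)
          rw [htau]; right; right
          show _ = _
          rw [Prod.mk.injEq]
          exact ⟨by linear_combination -hcc, by linear_combination⟩
        · -- τ (c-a, -a) = (a+c, c)
          rw [htau]; right; left
          rw [Prod.mk.injEq]
          exact ⟨by linear_combination -hcc, by linear_combination -hcc⟩
      · have hρmem : rhoPerm l ∈ Subgroup.closure
            ({rhoPerm l, tauPerm l} : Set (Equiv.Perm (ZMod (2 * l ^ 2) × ZMod (2 * l ^ 2)))) :=
          Subgroup.subset_closure (by left; rfl)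
        have hτmem : tauPerm l ∈ Subgroup.closure
            ({rhoPerm l, tauPerm l} : Set (Equiv.Perm (ZMod (2 * l ^ 2) × ZMod (2 * l ^ 2)))) :=
          Subgroup.subset_closure (by right; rfl)
        rintro p (rfl | rfl | rfl)
        · exact MulAction.mem_orbit_self _
        · refine ⟨⟨rhoPerm l, hρmem⟩, ?_⟩
          show rhoPerm l (0, a) = _
          rw [hrho, Prod.mk.injEq]
          exact ⟨by linear_combination, by linear_combination⟩
        · refine ⟨⟨tauPerm l, hτmem⟩ * ⟨rhoPerm l, hρmem⟩, ?_⟩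
          show tauPerm l (rhoPerm l (0, a)) = _
          rw [hrho, htau, Prod.mk.injEq]
          exact ⟨by linear_combination -hcc, by linear_combination⟩
    refine ⟨horb, ?_⟩
    rw [horb, Nat.card_coe_set_eq]
    refine Set.ncard_eq_three.mpr ⟨_, _, _, ?_, ?_, ?_, rfl⟩
    · intro h
      have := congrArg Prod.fst h
      simp only at this
      exact h1 this.symm
    · intro h
      have := congrArg Prod.fst h
      simp only at this
      exact h2 this
    · intro h
      have := congrArg Prod.snd h
      simp only at this
      exact h3 this
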